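/- arXiv:2508.20054 — 4 statements merged into one kernel-verified Lean document; each statement's English description precedes it below -/
import Mathlib

section
/- Every restriction category (a gs-monoidal category in which every arrow is copyable, i.e. f ; ∇_Y = ∇_X ; (f ⊗ f) for all f : X → Y) is a domain category: for every arrow f : X → Y, dom(f) ; f = f, where dom(f) = ∇_X ; (id_X ⊗ (f ; !_Y)) ; ρ⁻¹_X... i.e. ∇_X ; (id_X ⊗ f) ; (id_X ⊗ !_Y) ; ρ⁻¹_X ; f = f. -/
open CategoryTheory MonoidalCategory

universe v₁ v₂ u₁ u₂

/-- A gs-monoidal category: a symmetric monoidal category equipped with a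
multiplicative cocommutative comonoid structure (duplicator, discharger) on each object. -/
class GSMonoidal (C : Type u₁) [Category.{v₁} C] [MonoidalCategory C] [SymmetricCategory C] where
  /-- duplicator ∇_X : X ⟶ X ⊗ X -/
  dup : ∀ X : C, X ⟶ X ⊗ X
  /-- discharger !_X : X ⟶ I -/
  del : ∀ X : C, X ⟶ 𝟙_ C
  dup_coassoc : ∀ X : C, dup X ≫ (dup X ▷ X) ≫ (α_ X X X).hom = dup X ≫ (X ◁ dup X)
  dup_cocomm : ∀ X : C, dup X ≫ (β_ X X).hom = dup X
  dup_del_right : ∀ X : C, dup X ≫ (X ◁ del X) ≫ (ρ_ X).hom = 𝟙 X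
  dup_del_left : ∀ X : C, dup X ≫ (del X ▷ X) ≫ (λ_ X).hom = 𝟙 X
  dup_unit : dup (𝟙_ C) = (ρ_ (𝟙_ C)).inv
  del_unit : del (𝟙_ C) = 𝟙 (𝟙_ C)
  dup_tensor : ∀ X Y : C, dup (X ⊗ Y) = (dup X ⊗ₘ dup Y) ≫ tensorμ X X Y Y
  del_tensor : ∀ X Y : C, del (X ⊗ Y) = (del X ⊗ₘ del Y) ≫ (λ_ (𝟙_ C)).hom

/-- The domain of an arrow in a gs-monoidal category: dom(f) = ∇_X ; (id_X ⊗ (f ; !_Y)) ; ρ⁻¹_X. -/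
def gsDom {C : Type u₁} [Category.{v₁} C] [MonoidalCategory C] [SymmetricCategory C]
    [GSMonoidal C] {X Y : C} (f : X ⟶ Y) : X ⟶ X :=
  GSMonoidal.dup X ≫ (X ◁ (f ≫ GSMonoidal.del Y)) ≫ (ρ_ X).hom

section

open GSMonoidal

variable {C : Type u₁} [Category.{v₁} C] [MonoidalCategory C] [SymmetricCategory C] [GSMonoidal C]

theorem gsDom_comp {X Y Z : C} (f : X ⟶ Y) (g : X ⟶ Z) :
    gsDom f ≫ g = dup X ≫ (g ⊗ₘ (f ≫ del Y)) ≫ (ρ_ Z).hom := by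
  rw [gsDom, Category.assoc, Category.assoc, ← rightUnitor_naturality, ← Category.assoc _ (g ▷ _),
    ← tensorHom_def']

theorem gsDom_comp_self_of_copy {X Y : C} {f : X ⟶ Y} (hf : f ≫ dup Y = dup X ≫ (f ⊗ₘ f)) :
    gsDom f ≫ f = f :=
  calc gsDom f ≫ f = (dup X ≫ (f ⊗ₘ f)) ≫ (Y ◁ del Y) ≫ (ρ_ Y).hom := by
        rw [gsDom_comp, Category.assoc, ← id_tensorHom, tensorHom_comp_tensorHom_assoc,
          Category.comp_id]
    _ = f := by rw [← hf, Category.assoc, dup_del_right, Category.comp_id]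

end

theorem restriction_is_domain_category {C : Type u₁} [Category.{v₁} C] [MonoidalCategory C]
    [SymmetricCategory C] [GSMonoidal C]
    (hcopy : ∀ {X Y : C} (f : X ⟶ Y), f ≫ GSMonoidal.dup Y = GSMonoidal.dup X ≫ (f ⊗ₘ f))
    {X Y : C} (f : X ⟶ Y) :
    gsDom f ≫ f = f :=
  gsDom_comp_self_of_copy (hcopy f)
end

section
/- In a domain category C, for every arrow f : X → Y the following hold: (1) dom(f ; ∇_Y) = dom(f); (2) dom(∇_X ; (f ⊗ f)) = dom(f); (3) dom(f ; !_Y) = dom(f). -/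
open CategoryTheory MonoidalCategory

universe v₁ v₂ u₁ u₂

/-!
The domain of `f` only depends on its "total part" `f ≫ !`, so each identity reduces to an
equation between arrows into the unit. For `f ≫ ∇` and `f ≫ !` this is counitality and the
multiplicativity of `!`. For `∇ ≫ (f ⊗ g)`, discarding the two outputs one after the other
gives `(∇ ≫ (f ⊗ g)) ≫ ! = dom(f) ≫ g ≫ !`, and the domain axiom `dom(f) ≫ f = f` finishes.
-/

namespace GSMonoidal

variable {C : Type u₁} [Category.{v₁} C] [MonoidalCategory C] [SymmetricCategory C] [GSMonoidal C]

lemma gsDom_eq_of_comp_del_eq {X Y Z : C} {f : X ⟶ Y} {g : X ⟶ Z}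
    (h : f ≫ del Y = g ≫ del Z) : gsDom f = gsDom g := by
  simp only [gsDom, h]

lemma dup_comp_del_whiskerRight (X : C) : dup X ≫ del X ▷ X = (λ_ X).inv :=
  (Iso.comp_hom_eq_id (λ_ X)).mp (by rw [Category.assoc]; exact dup_del_left X)

lemma dup_comp_del_tensor (X : C) : dup X ≫ del (X ⊗ X) = del X := by
  rw [del_tensor, MonoidalCategory.tensorHom_def, Category.assoc, ← Category.assoc (dup X),
    dup_comp_del_whiskerRight, leftUnitor_naturality, Iso.inv_hom_id_assoc]

lemma gsDom_eq_whiskerRight {X Y : C} (f : X ⟶ Y) :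
    gsDom f = dup X ≫ (f ≫ del Y) ▷ X ≫ (λ_ X).hom := by
  rw [gsDom, ← braiding_leftUnitor X, BraidedCategory.braiding_naturality_right_assoc,
    ← Category.assoc, dup_cocomm]

lemma dup_comp_tensorHom_comp_del {X Y Z : C} (f : X ⟶ Y) (g : X ⟶ Z) :
    (dup X ≫ (f ⊗ₘ g)) ≫ del (Y ⊗ Z) = gsDom f ≫ g ≫ del Z := by
  calc (dup X ≫ (f ⊗ₘ g)) ≫ del (Y ⊗ Z)
      = dup X ≫ ((f ≫ del Y) ⊗ₘ (g ≫ del Z)) ≫ (λ_ (𝟙_ C)).hom := by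
        rw [del_tensor, Category.assoc, tensorHom_comp_tensorHom_assoc]
    _ = dup X ≫ (f ≫ del Y) ▷ X ≫ 𝟙_ C ◁ (g ≫ del Z) ≫ (λ_ (𝟙_ C)).hom := by
        rw [MonoidalCategory.tensorHom_def, Category.assoc]
    _ = gsDom f ≫ g ≫ del Z := by
        rw [leftUnitor_naturality, gsDom_eq_whiskerRight]
        simp only [Category.assoc]

lemma gsDom_comp_dup {X Y : C} (f : X ⟶ Y) : gsDom (f ≫ dup Y) = gsDom f :=
  gsDom_eq_of_comp_del_eq (by rw [Category.assoc, dup_comp_del_tensor])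

lemma gsDom_comp_del {X Y : C} (f : X ⟶ Y) : gsDom (f ≫ del Y) = gsDom f :=
  gsDom_eq_of_comp_del_eq (by rw [Category.assoc, del_unit, Category.comp_id])

lemma gsDom_dup_comp_tensorHom {X Y Z : C} (f : X ⟶ Y) (g : X ⟶ Z) :
    gsDom (dup X ≫ (f ⊗ₘ g)) = gsDom (gsDom f ≫ g) :=
  gsDom_eq_of_comp_del_eq (by rw [dup_comp_tensorHom_comp_del, Category.assoc])

end GSMonoidal

open GSMonoidal in
theorem dom_structural_invariance {C : Type u₁} [Category.{v₁} C] [MonoidalCategory C]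
    [SymmetricCategory C] [GSMonoidal C]
    (hdom : ∀ {X Y : C} (f : X ⟶ Y), gsDom f ≫ f = f)
    {X Y : C} (f : X ⟶ Y) :
    gsDom (f ≫ GSMonoidal.dup Y) = gsDom f ∧
      gsDom (GSMonoidal.dup X ≫ (f ⊗ₘ f)) = gsDom f ∧
      gsDom (f ≫ GSMonoidal.del Y) = gsDom f :=
  ⟨gsDom_comp_dup f, by rw [gsDom_dup_comp_tensorHom, hdom], gsDom_comp_del f⟩
end

section
/- Let F : C → D be a lax symmetric monoidal functor between gs-monoidal categories. If F is domain preserving, then F is mass preserving: for all objects X, ∇_{F(X)} ; ψ_{X,X} ; F(!_X ⊗ !_X) = F(!_X) ; F(ρ⁻¹_I), where ρ⁻¹_I : I → I ⊗ I. -/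
open CategoryTheory MonoidalCategory

universe v₁ v₂ u₁ u₂

open Functor.LaxMonoidal in
theorem GSMonoidal.dup_μ_map_tensorHom_del_of_domain_preserving
    {C : Type u₁} [Category.{v₁} C] [MonoidalCategory C] [SymmetricCategory C] [GSMonoidal C]
    {D : Type u₂} [Category.{v₂} D] [MonoidalCategory D] [SymmetricCategory D] [GSMonoidal D]
    (F : C ⥤ D) [F.LaxMonoidal] {X Z : C}
    (hdom : GSMonoidal.dup (F.obj X) ≫ μ F X X ≫ F.map (X ◁ GSMonoidal.del X) =
      F.map (ρ_ X).inv)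
    (g : X ⟶ Z) :
    GSMonoidal.dup (F.obj X) ≫ μ F X X ≫ F.map (g ⊗ₘ GSMonoidal.del X) =
      F.map g ≫ F.map (ρ_ Z).inv :=
  calc GSMonoidal.dup (F.obj X) ≫ μ F X X ≫ F.map (g ⊗ₘ GSMonoidal.del X)
      = (GSMonoidal.dup (F.obj X) ≫ μ F X X ≫ F.map (X ◁ GSMonoidal.del X)) ≫
          F.map (g ▷ 𝟙_ C) := by
        simp only [tensorHom_def', F.map_comp, Category.assoc]
    _ = F.map (ρ_ X).inv ≫ F.map (g ▷ 𝟙_ C) := by rw [hdom]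
    _ = F.map g ≫ F.map (ρ_ Z).inv := by
        rw [← F.map_comp, ← F.map_comp, rightUnitor_inv_naturality]

open Functor.LaxMonoidal in
theorem domain_preserving_implies_mass_preserving {C : Type u₁} [Category.{v₁} C] [MonoidalCategory C] [SymmetricCategory C] [GSMonoidal C]
    {D : Type u₂} [Category.{v₂} D] [MonoidalCategory D] [SymmetricCategory D] [GSMonoidal D]
    (F : C ⥤ D) [F.LaxBraided]
    (hdom : ∀ X : C, GSMonoidal.dup (F.obj X) ≫ μ F X X ≫ F.map (X ◁ GSMonoidal.del X) =
      F.map (ρ_ X).inv)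
    (X : C) :
    GSMonoidal.dup (F.obj X) ≫ μ F X X ≫ F.map (GSMonoidal.del X ⊗ₘ GSMonoidal.del X) =
      F.map (GSMonoidal.del X) ≫ F.map (ρ_ (𝟙_ C)).inv :=
  GSMonoidal.dup_μ_map_tensorHom_del_of_domain_preserving F (hdom X) (GSMonoidal.del X)
end

section
/- Let F : C → D be a lax symmetric monoidal functor between gs-monoidal categories where D is a restriction category (every arrow g in D satisfies g ; ∇ = ∇ ; (g ⊗ g)). Then F is mass preserving if and only if F is unital domain preserving. -/
open CategoryTheory MonoidalCategory

universe v₁ v₂ u₁ u₂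

theorem GSMonoidal.dup_comp_μ_comp_map_tensorHom {C : Type u₁} [Category.{v₁} C]
    [MonoidalCategory C] {D : Type u₂} [Category.{v₂} D] [MonoidalCategory D]
    [SymmetricCategory D] [GSMonoidal D] (F : C ⥤ D) [F.LaxMonoidal] {X Y : C} (f : X ⟶ Y)
    (hf : F.map f ≫ dup (F.obj Y) = dup (F.obj X) ≫ (F.map f ⊗ₘ F.map f)) :
    dup (F.obj X) ≫ Functor.LaxMonoidal.μ F X X ≫ F.map (f ⊗ₘ f) =
      F.map f ≫ dup (F.obj Y) ≫ Functor.LaxMonoidal.μ F Y Y := by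
  rw [← Functor.LaxMonoidal.μ_natural, ← Category.assoc, ← hf, Category.assoc]

open Functor.LaxMonoidal in
theorem mass_preserving_iff_unital_domain_preserving {C : Type u₁} [Category.{v₁} C] [MonoidalCategory C] [SymmetricCategory C] [GSMonoidal C]
    {D : Type u₂} [Category.{v₂} D] [MonoidalCategory D] [SymmetricCategory D] [GSMonoidal D]
    (F : C ⥤ D) [F.LaxBraided]
    (hrestr : ∀ {A B : D} (g : A ⟶ B), g ≫ GSMonoidal.dup B = GSMonoidal.dup A ≫ (g ⊗ₘ g)) :
    (∀ X : C,
        GSMonoidal.dup (F.obj X) ≫ μ F X X ≫ F.map (GSMonoidal.del X ⊗ₘ GSMonoidal.del X) =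
          F.map (GSMonoidal.del X) ≫ F.map (ρ_ (𝟙_ C)).inv) ↔
      GSMonoidal.dup (F.obj (𝟙_ C)) ≫ μ F (𝟙_ C) (𝟙_ C) = F.map (ρ_ (𝟙_ C)).inv := by
  constructor
  · intro hmass
    simpa only [GSMonoidal.del_unit, id_tensorHom_id, F.map_id,
      Category.comp_id, Category.id_comp] using hmass (𝟙_ C)
  · intro hunit X
    rw [GSMonoidal.dup_comp_μ_comp_map_tensorHom F _ (hrestr _), hunit]
end
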